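/- Monotonicity of n^x along internal steps: if (s', t') is a NextI' step, then for every clock x one has n^x(s') ≤ n^x(t') as elements of ℕ ∪ {∞}. -/

import Mathlib

open scoped Classical

universe u v

/-- A state of an explicit real-time system: a non-clock component and the clock values. -/
structure RTState (α : Type u) (𝒳 : Type v) where
  core : α
  clk : 𝒳 → ℕ

/-- An extended state: an underlying state together with the mapped-clock values. -/
structure RTEState (α : Type u) (𝒳 : Type v) where
  st : RTState α 𝒳
  m : 𝒳 → ℕ

namespace RT

variable {α : Type u} {𝒳 : Type v}

/-- `T x d s`: the state agreeing with `s` except that clock `x` has value `d`. -/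
noncomputable def T (x : 𝒳) (d : ℕ) (s : RTState α 𝒳) : RTState α 𝒳 :=
  ⟨s.core, fun y => if y = x then d else s.clk y⟩

/-- `𝒯^x_d` applied pointwise to a behavior. -/
noncomputable def Tb (x : 𝒳) (d : ℕ) (σ : ℕ → RTState α 𝒳) : ℕ → RTState α 𝒳 :=
  fun i => T x d (σ i)

/-- `N_S`: behaviors each of whose steps is a `NextI` step or a stuttering step. -/
def NS (NextI : RTState α 𝒳 → RTState α 𝒳 → Prop) : Set (ℕ → RTState α 𝒳) :=
  { σ | ∀ i, NextI (σ i) (σ (i + 1)) ∨ σ (i + 1) = σ i }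

/-- `AdvanceTime_S`: all clocks advance by one, provided no time bound is hit. -/
def AdvanceTimeS (B : 𝒳 → RTState α 𝒳 → Set ℕ) (s t : RTState α 𝒳) : Prop :=
  t.core = s.core ∧ (∀ x, t.clk x = s.clk x + 1) ∧ ∀ x, s.clk x ∉ B x s

/-- `ETP^x(s)`: points in time at which a newly possible behavior for state `s` exists. -/
def ETP (NextI : RTState α 𝒳 → RTState α 𝒳 → Prop) (x : 𝒳) (s : RTState α 𝒳) :
    Set ℕ :=
  { t | 1 ≤ t ∧ ∃ σ ∈ NS NextI, σ 0 = T x t s ∧ Tb x (t - 1) σ ∉ NS NextI }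

/-- `AdvanceTime_Ŝ`: the time-optimized advance-time action. -/
def AdvanceTimeHat (B relETP : 𝒳 → RTState α 𝒳 → Set ℕ) (s t : RTState α 𝒳) : Prop :=
  t.core = s.core ∧ (∃ x, s.clk x < t.clk x) ∧
    (∀ x, t.clk x = s.clk x ∨ (s.clk x < t.clk x ∧ t.clk x ∈ relETP x s)) ∧
    ∀ x, ∀ b ∈ B x s, s.clk x ≤ b → t.clk x ≤ b

/-- `Init'`: initial extended states, with mapped clocks equal to the clocks. -/
def EInit (Init : Set (RTState α 𝒳)) : Set (RTEState α 𝒳) :=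
  { s' | s'.st ∈ Init ∧ ∀ x, s'.m x = s'.st.clk x }

/-- `NextI'`: internal step of the extended system, mapped clocks unchanged. -/
def ENextI (NextI : RTState α 𝒳 → RTState α 𝒳 → Prop) (s' t' : RTEState α 𝒳) : Prop :=
  NextI s'.st t'.st ∧ ∀ x, t'.m x = s'.m x

/-- `AdvanceTime'`: extended advance-time step, updating the mapped clocks. -/
def EAdvanceTime (B relETP : 𝒳 → RTState α 𝒳 → Set ℕ) (s' t' : RTEState α 𝒳) : Prop :=
  AdvanceTimeS B s'.st t'.st ∧
    ∀ x, t'.m x = sSup ({s'.m x} ∪ { n ∈ relETP x s'.st | n ≤ t'.st.clk x })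

/-- `T'^x_d`: set clock `x` of the underlying state to `d`; mapped clocks unchanged. -/
noncomputable def ET (x : 𝒳) (d : ℕ) (s' : RTEState α 𝒳) : RTEState α 𝒳 :=
  ⟨T x d s'.st, s'.m⟩

/-- `𝒯'^x_d` applied pointwise to a behavior of extended states. -/
noncomputable def ETb (x : 𝒳) (d : ℕ) (σ : ℕ → RTEState α 𝒳) : ℕ → RTEState α 𝒳 :=
  fun i => ET x d (σ i)

/-- `N_{S'}`: extended behaviors in which every step is a `NextI'` step or stuttering. -/
def ENS (NextI : RTState α 𝒳 → RTState α 𝒳 → Prop) : Set (ℕ → RTEState α 𝒳) :=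
  { σ | ∀ i, ENextI NextI (σ i) (σ (i + 1)) ∨ σ (i + 1) = σ i }

/-- `n^x(s')`, an element of `ℕ∞` (`sInf ∅ = ⊤`), with truncated subtraction on `ℕ`. -/
noncomputable def nfun (NextI : RTState α 𝒳 → RTState α 𝒳 → Prop) (x : 𝒳)
    (s' : RTEState α 𝒳) : ℕ∞ :=
  sInf ((fun n : ℕ => (n : ℕ∞)) ''
    { n : ℕ | ∃ σ ∈ ENS NextI, σ 0 = ET x (s'.st.clk x - n) s' ∧
        ETb x (s'.st.clk x - n - 1) σ ∉ ENS NextI })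

/-- The invariant `Inv`: `s'.x ≤ s'.m^x + n^x(s')` in `ℕ∞` for every clock `x`. -/
def Inv (NextI : RTState α 𝒳 → RTState α 𝒳 → Prop) (s' : RTEState α 𝒳) : Prop :=
  ∀ x, (s'.st.clk x : ℕ∞) ≤ (s'.m x : ℕ∞) + nfun NextI x s'

/-- `bar(s')`: the state with the core of `st s'` and every clock set to its mapped value. -/
def bar (s' : RTEState α 𝒳) : RTState α 𝒳 :=
  ⟨s'.st.core, s'.m⟩

/-- A step of the extended system: `NextI'`, `AdvanceTime'`, or stuttering. -/
def EStep (NextI : RTState α 𝒳 → RTState α 𝒳 → Prop)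
    (B relETP : 𝒳 → RTState α 𝒳 → Set ℕ) (s' t' : RTEState α 𝒳) : Prop :=
  ENextI NextI s' t' ∨ EAdvanceTime B relETP s' t' ∨ t' = s'

/-- An extended state is reachable iff it arises from `Init'` by finitely many steps. -/
def EReachable (Init : Set (RTState α 𝒳)) (NextI : RTState α 𝒳 → RTState α 𝒳 → Prop)
    (B relETP : 𝒳 → RTState α 𝒳 → Set ℕ) (s' : RTEState α 𝒳) : Prop :=
  ∃ i ∈ EInit Init, Relation.ReflTransGen (EStep NextI B relETP) i s'

/-- Replace the values of the clocks in the set `Y` by their mapped-clock values. -/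
noncomputable def replaceClocks (Y : Set 𝒳) (s' : RTEState α 𝒳) : RTEState α 𝒳 :=
  ⟨⟨s'.st.core, fun x => if x ∈ Y then s'.m x else s'.st.clk x⟩, s'.m⟩

end RT

lemma Nat.exists_least_of_le {Q : ℕ → Prop} {a c : ℕ} (hac : a ≤ c) (hc : Q c) :
    ∃ k, a ≤ k ∧ k ≤ c ∧ Q k ∧ ∀ j, a ≤ j → j < k → ¬ Q j := by
  have hex : ∃ k, a ≤ k ∧ Q k := ⟨c, hac, hc⟩
  obtain ⟨hak, hk⟩ := Nat.find_spec hex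
  exact ⟨Nat.find hex, hak, Nat.find_min' hex ⟨hac, hc⟩, hk,
    fun j haj hj hQ => Nat.find_min hex hj ⟨haj, hQ⟩⟩

namespace RT

variable {α : Type u} {𝒳 : Type v}

lemma T_self (x : 𝒳) (s : RTState α 𝒳) : T x (s.clk x) s = s := by
  simp only [T]
  congr
  funext y
  split_ifs with hy <;> simp [hy]

lemma T_T (x : 𝒳) (a b : ℕ) (s : RTState α 𝒳) : T x a (T x b s) = T x a s := by
  simp only [T, RTState.mk.injEq, true_and]
  funext y
  split_ifs <;> rfl

lemma ET_self (x : 𝒳) (s' : RTEState α 𝒳) : ET x (s'.st.clk x) s' = s' := by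
  simp [ET, T_self]

lemma ET_ET (x : 𝒳) (a b : ℕ) (s' : RTEState α 𝒳) : ET x a (ET x b s') = ET x a s' := by
  simp [ET, T_T]

variable (NextI : RTState α 𝒳 → RTState α 𝒳 → Prop)

def ENextIOrStutter (s' t' : RTEState α 𝒳) : Prop :=
  ENextI NextI s' t' ∨ t' = s'

lemma const_mem_ENS (a : RTEState α 𝒳) : (fun _ => a) ∈ ENS NextI :=
  fun _ => Or.inr rfl

/-- `n^x(s')` is the least `n` such that `NewlyPossible NextI x s' (s'.x - n)`. -/
def NewlyPossible (x : 𝒳) (s' : RTEState α 𝒳) (d : ℕ) : Prop :=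
  ∃ σ ∈ ENS NextI, σ 0 = ET x d s' ∧ ETb x (d - 1) σ ∉ ENS NextI

lemma nfun_le_of_newlyPossible {x : 𝒳} {s' : RTEState α 𝒳} {n : ℕ}
    (hn : NewlyPossible NextI x s' (s'.st.clk x - n)) : nfun NextI x s' ≤ n :=
  sInf_le ⟨n, hn, rfl⟩

/-- The witness is `T'^x_d(s')` followed by `τ`. -/
lemma newlyPossible_of_cons {x : 𝒳} {s' t' : RTEState α 𝒳} {d : ℕ}
    (hstep : ENextIOrStutter NextI (ET x d s') (ET x d t'))
    {τ : ℕ → RTEState α 𝒳} (hτ : τ ∈ ENS NextI) (hτ0 : τ 0 = ET x d t')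
    (hbad : ¬ ENextIOrStutter NextI (ET x (d - 1) s') (ET x (d - 1) t') ∨
      ETb x (d - 1) τ ∉ ENS NextI) :
    NewlyPossible NextI x s' d := by
  refine ⟨Stream'.cons (ET x d s') τ, ?_, rfl, fun hcon => ?_⟩
  · rintro (_ | i)
    · show ENextIOrStutter NextI (ET x d s') (τ 0)
      rwa [hτ0]
    · exact hτ i
  rcases hbad with hfirst | hrest
  · have h0 : ENextIOrStutter NextI (ET x (d - 1) (ET x d s')) (ET x (d - 1) (τ 0)) := hcon 0
    rw [hτ0, ET_ET, ET_ET] at h0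
    exact hfirst h0
  · exact hrest fun i => hcon (i + 1)

lemma ENextIOrStutter_ET_self {s' t' : RTEState α 𝒳} (h : ENextI NextI s' t') {x : 𝒳}
    (hx : t'.st.clk x = s'.st.clk x) :
    ENextIOrStutter NextI (ET x (s'.st.clk x) s') (ET x (s'.st.clk x) t') := by
  rw [ET_self, ← hx, ET_self]
  exact Or.inl h

/-- Take the least `k ≥ d` at which the step `T'^x_k(s') → T'^x_k(t')` is still allowed
(`k = s'.x` qualifies). If `k = d`, prefix `T'^x_d(s')` to the witness for `t'`; otherwise the
two-state behavior `T'^x_k(s'), T'^x_k(t'), …` is a witness, since its first step is not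
allowed at `k - 1`. -/
lemma NewlyPossible.of_ENextI {s' t' : RTEState α 𝒳} (h : ENextI NextI s' t') {x : 𝒳}
    (hx : t'.st.clk x = s'.st.clk x) {d : ℕ} (hd : d ≤ s'.st.clk x)
    (ht : NewlyPossible NextI x t' d) :
    ∃ k, d ≤ k ∧ k ≤ s'.st.clk x ∧ NewlyPossible NextI x s' k := by
  obtain ⟨k, hdk, hkc, hk, hmin⟩ := Nat.exists_least_of_le
    (Q := fun k => ENextIOrStutter NextI (ET x k s') (ET x k t')) hd
    (ENextIOrStutter_ET_self NextI h hx)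
  refine ⟨k, hdk, hkc, ?_⟩
  rcases hdk.eq_or_lt with rfl | hlt
  · obtain ⟨σ, hσ, hσ0, hbad⟩ := ht
    exact newlyPossible_of_cons NextI hk hσ hσ0 (Or.inr hbad)
  · refine newlyPossible_of_cons NextI hk (const_mem_ENS NextI _) rfl (Or.inl ?_)
    exact hmin (k - 1) (by omega) (by omega)

end RT

theorem nfun_mono_of_internal_step {α : Type u} {𝒳 : Type v}
    (NextI : RTState α 𝒳 → RTState α 𝒳 → Prop)
    (hClk : ∀ s t, NextI s t → ∀ x, t.clk x = s.clk x)
    (s' t' : RTEState α 𝒳) (h : RT.ENextI NextI s' t') :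
    ∀ x, RT.nfun NextI x s' ≤ RT.nfun NextI x t' := by
  intro x
  have hx : t'.st.clk x = s'.st.clk x := hClk _ _ h.1 x
  refine le_sInf ?_
  rintro _ ⟨n, hn, rfl⟩
  have hn' : RT.NewlyPossible NextI x t' (s'.st.clk x - n) := hx ▸ hn
  obtain ⟨k, hdk, hkc, hs⟩ := RT.NewlyPossible.of_ENextI NextI h hx (Nat.sub_le _ n) hn'
  calc RT.nfun NextI x s' ≤ (s'.st.clk x - k : ℕ) :=
        RT.nfun_le_of_newlyPossible NextI (by rwa [Nat.sub_sub_self hkc])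
    _ ≤ n := by exact_mod_cast (by omega)
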